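/- arXiv:math/0511217 — 3 statements merged into one kernel-verified Lean document; each statement's English description precedes it below -/
import Mathlib

section
/- The 4×4 matrix T^μ₁ = ((0,-1,1,-1),(0,1,0,1),(-1,1,-1,1),(-1,-1,0,0)) belongs to Sp(4,ℤ), and the symmetric matrix B₁ = ((-1/2 + i/√2, 1/2),(1/2, -1/2 + i/√2)) satisfies (A B₁ + B)(C B₁ + D)⁻¹ = B₁, where A,B,C,D are the 2×2 blocks of T^μ₁. -/
open Matrix Complex

/-- The standard symplectic form matrix for `Sp(4,ℤ)`. -/
def J4 : Matrix (Fin 4) (Fin 4) ℤ :=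
  !![0, 0, 1, 0; 0, 0, 0, 1; -1, 0, 0, 0; 0, -1, 0, 0]

/-!
`T ∈ Sp(4,ℤ)` is a finite integer computation. For the action write `s = i/√2`, so that `B₁` has
`s - 1/2` on the diagonal and `1/2` off it; only `2 s² = -1` matters. Then
`C B₁ + D = s • !![-1, 1; -1, -1]` has determinant `2 s² = -1`, and `A B₁ + B = B₁ (C B₁ + D)`,
so `B₁` is a fixed point.
-/

theorem Matrix.mul_add_mul_inv_eq_self {n R : Type*} [Fintype n] [DecidableEq n] [CommRing R]
    {A B C D Z : Matrix n n R} (hfix : A * Z + B = Z * (C * Z + D))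
    (hdet : IsUnit (C * Z + D).det) : (A * Z + B) * (C * Z + D)⁻¹ = Z := by
  rw [hfix, Matrix.mul_assoc, Matrix.mul_nonsing_inv _ hdet, Matrix.mul_one]

theorem two_mul_sq_I_div_sqrt_two : 2 * (I / (Real.sqrt 2 : ℂ)) ^ 2 = -1 := by
  have hsqrt : ((Real.sqrt 2 : ℝ) : ℂ) ^ 2 = 2 := by
    rw [← Complex.ofReal_pow, Real.sq_sqrt zero_le_two, Complex.ofReal_ofNat]
  rw [div_pow, I_sq, hsqrt]
  norm_num

theorem symplectic_action_fixes_of_two_mul_sq_eq_neg_one {K : Type*} [Field K] (s : K)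
    (hs : 2 * s ^ 2 = -1) :
    let Z : Matrix (Fin 2) (Fin 2) K := !![-1/2 + s, 1/2; 1/2, -1/2 + s]
    (!![0, -1; 0, 1] * Z + !![1, -1; 0, 1]) * (!![-1, 1; -1, -1] * Z + !![-1, 1; 0, 0])⁻¹ = Z := by
  intro Z
  have h2 : (2 : K) ≠ 0 := fun h ↦ by simp [h] at hs
  have hden : !![-1, 1; -1, -1] * Z + !![-1, 1; 0, 0] = !![-s, s; -s, -s] := by
    ext i j; fin_cases i <;> fin_cases j <;> simp [Z] <;> field_simp <;> ring
  have hfix : !![0, -1; 0, 1] * Z + !![1, -1; 0, 1] = Z * !![-s, s; -s, -s] := by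
    ext i j
    fin_cases i <;> fin_cases j <;> simp [Z] <;> field_simp <;>
      first | linear_combination hs | linear_combination -hs
  refine Matrix.mul_add_mul_inv_eq_self (hden ▸ hfix) ?_
  rw [hden, det_fin_two_of]
  have hdet : -s * -s - s * -s = -1 := by linear_combination hs
  exact hdet ▸ isUnit_one.neg

theorem Burnside_period_matrix_fixed :
    let T : Matrix (Fin 4) (Fin 4) ℤ :=
      !![0, -1, 1, -1; 0, 1, 0, 1; -1, 1, -1, 1; -1, -1, 0, 0]
    let A : Matrix (Fin 2) (Fin 2) ℂ := !![0, -1; 0, 1]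
    let B : Matrix (Fin 2) (Fin 2) ℂ := !![1, -1; 0, 1]
    let C : Matrix (Fin 2) (Fin 2) ℂ := !![-1, 1; -1, -1]
    let D : Matrix (Fin 2) (Fin 2) ℂ := !![-1, 1; 0, 0]
    let B₁ : Matrix (Fin 2) (Fin 2) ℂ :=
      !![-1/2 + Complex.I / (Real.sqrt 2 : ℂ), 1/2;
         1/2, -1/2 + Complex.I / (Real.sqrt 2 : ℂ)]
    Tᵀ * J4 * T = J4 ∧ (A * B₁ + B) * (C * B₁ + D)⁻¹ = B₁ :=
  ⟨by decide, symplectic_action_fixes_of_two_mul_sq_eq_neg_one _ two_mul_sq_I_div_sqrt_two⟩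
end

section
/- The 4×4 matrix T^μ₁ = ((0,0,-1,0),(0,0,-1,-1),(1,-1,0,0),(0,1,0,0)) belongs to Sp(4,ℤ), and the matrix B₂ = (i/√3)·((2,1),(1,2)) satisfies (A B₂ + B)(C B₂ + D)⁻¹ = B₂, where A,B,C,D are the 2×2 blocks of T^μ₁. -/
open Matrix Complex

theorem mul_nonsing_inv_eq_of_eq_mul {n R : Type*} [Fintype n] [DecidableEq n] [CommRing R]
    {P Q Z : Matrix n n R} (hQ : IsUnit Q.det) (h : P = Z * Q) : P * Q⁻¹ = Z := by
  rw [h, mul_nonsing_inv_cancel_right _ _ hQ]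

/-- With `A = D = 0` the fixed-point equation reads `B = Z C Z`. For `Z = s • M` this is
`B = s² • M C M = s² • !![3, 0; 3, 3]`, and `C Z = s • !![1, -1; 1, 2]` has determinant
`3 s²`; so only `3 s² = -1` matters, which `s = i/√3` satisfies. -/
theorem siegelAction_fixes_smul_of_three_mul_sq_eq_neg_one {R : Type*} [CommRing R] {s : R}
    (hs : 3 * s ^ 2 = -1) :
    (!![0, 0; 0, 0] * (s • !![2, 1; 1, 2]) + !![-1, 0; -1, -1]) *
        (!![1, -1; 0, 1] * (s • !![2, 1; 1, 2]) + !![0, 0; 0, 0])⁻¹ =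
      s • (!![2, 1; 1, 2] : Matrix (Fin 2) (Fin 2) R) := by
  have hCZ : !![1, -1; 0, 1] * (s • !![2, 1; 1, 2]) + !![0, 0; 0, 0] =
      s • (!![1, -1; 1, 2] : Matrix (Fin 2) (Fin 2) R) := by
    ext i j; fin_cases i <;> fin_cases j <;> simp <;> ring
  have hdet : IsUnit (s • (!![1, -1; 1, 2] : Matrix (Fin 2) (Fin 2) R)).det := by
    rw [det_smul, det_fin_two_of, Fintype.card_fin,
      show s ^ 2 * (1 * 2 - -1 * 1) = -1 by linear_combination hs]
    exact isUnit_one.neg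
  rw [hCZ]
  refine mul_nonsing_inv_eq_of_eq_mul hdet ?_
  calc (!![0, 0; 0, 0] * (s • !![2, 1; 1, 2]) + !![-1, 0; -1, -1] : Matrix (Fin 2) (Fin 2) R)
      = (-1 : R) • !![1, 0; 1, 1] := by ext i j; fin_cases i <;> fin_cases j <;> simp
    _ = (3 * s ^ 2) • !![1, 0; 1, 1] := by rw [hs]
    _ = s • !![2, 1; 1, 2] * (s • !![1, -1; 1, 2]) := by
      ext i j; fin_cases i <;> fin_cases j <;> simp <;> ring

theorem three_mul_I_div_sqrt_three_sq : 3 * (I / (Real.sqrt 3 : ℂ)) ^ 2 = -1 := by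
  have h3 : ((Real.sqrt 3 : ℂ)) ^ 2 = 3 := by
    norm_cast
    exact Real.sq_sqrt (by norm_num)
  rw [div_pow, I_sq, h3]
  norm_num

theorem D6_period_matrix_fixed :
    let T : Matrix (Fin 4) (Fin 4) ℤ :=
      !![0, 0, -1, 0; 0, 0, -1, -1; 1, -1, 0, 0; 0, 1, 0, 0]
    let A : Matrix (Fin 2) (Fin 2) ℂ := !![0, 0; 0, 0]
    let B : Matrix (Fin 2) (Fin 2) ℂ := !![-1, 0; -1, -1]
    let C : Matrix (Fin 2) (Fin 2) ℂ := !![1, -1; 0, 1]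
    let D : Matrix (Fin 2) (Fin 2) ℂ := !![0, 0; 0, 0]
    let B₂ : Matrix (Fin 2) (Fin 2) ℂ :=
      (Complex.I / (Real.sqrt 3 : ℂ)) • !![2, 1; 1, 2]
    Tᵀ * J4 * T = J4 ∧ (A * B₂ + B) * (C * B₂ + D)⁻¹ = B₂ :=
  ⟨by decide, siegelAction_fixes_smul_of_three_mul_sq_eq_neg_one three_mul_I_div_sqrt_three_sq⟩
end

section
/- Let ε₅ = e^{2πi/5} and T^μ = ((-1,1,0,0),(-1,0,1,1),(0,0,0,1),(-1,0,0,0)). Then T^μ ∈ Sp(4,ℤ), and the matrix B₃ = ((ε₅, ε₅/(1+ε₅)),(ε₅/(1+ε₅), 1-ε₅⁴)) is symmetric, has positive-definite imaginary part, and satisfies (A B₃ + B)(C B₃ + D)⁻¹ = B₃ with A,B,C,D the blocks of T^μ. -/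
/-!
`ε = ε₅` is a primitive fifth root of unity, so `1 + ε + ε² + ε³ + ε⁴ = 0`; this makes `1 + ε`
invertible with `ε / (1 + ε) = -(ε² + ε⁴)`, after which `A B₃ + B = B₃ (C B₃ + D)` is an identity
between polynomials in `ε` modulo the cyclotomic relation, and `det (C B₃ + D) = ε ≠ 0`.
Since `|ε| = 1` we have `ε⁴ = ε⁻¹ = conj ε`, so `Im B₃ = [[s, t], [t, s]]` with `s = Im ε` and
`t = s / |1 + ε|²`; as `Re ε > 0`, `|1 + ε| > 1` and hence `0 < t < s`.
-/

open Matrix Complex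

theorem Matrix.posDef_fin_two {a b c : ℝ} (ha : 0 < a) (hdet : b ^ 2 < a * c) :
    !![a, b; b, c].PosDef := by
  refine posDef_iff_dotProduct_mulVec.mpr ⟨?_, fun x hx => ?_⟩
  · ext i j
    fin_cases i <;> fin_cases j <;> rfl
  · simp only [dotProduct, Pi.star_apply, star_trivial, mulVec, of_apply, cons_val',
      cons_val_fin_one, Fin.sum_univ_two, Fin.isValue, cons_val_zero, cons_val_one]
    have hsquare : a * (x 0 * (a * x 0 + b * x 1) + x 1 * (b * x 0 + c * x 1)) =
        (a * x 0 + b * x 1) ^ 2 + (a * c - b ^ 2) * x 1 ^ 2 := by ring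
    refine pos_of_mul_pos_right ?_ ha.le
    rw [hsquare]
    rcases eq_or_ne (x 1) 0 with h1 | h1
    · have h0 : x 0 ≠ 0 := fun h0 => hx (funext fun i => by fin_cases i <;> simp [h0, h1])
      simpa [h1] using sq_pos_of_ne_zero (mul_ne_zero ha.ne' h0)
    · exact add_pos_of_nonneg_of_pos (sq_nonneg _)
        (mul_pos (sub_pos.mpr hdet) (sq_pos_of_ne_zero h1))

section PeriodMatrix

variable {K : Type*} [Field K]

theorem IsPrimitiveRoot.geom_sum_five_eq_zero {ε : K} (hε : IsPrimitiveRoot ε 5) :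
    1 + ε + ε ^ 2 + ε ^ 3 + ε ^ 4 = 0 := by
  simpa [Finset.sum_range_succ] using hε.geom_sum_eq_zero (by norm_num)

theorem IsPrimitiveRoot.div_one_add_eq_of_five {ε : K} (hε : IsPrimitiveRoot ε 5) :
    ε / (1 + ε) = -(ε ^ 2 + ε ^ 4) := by
  have hinv : (1 + ε)⁻¹ = -(ε + ε ^ 3) := inv_eq_of_mul_eq_one_right <| by
    linear_combination -hε.geom_sum_five_eq_zero
  rw [div_eq_mul_inv, hinv]
  ring

def periodMatrix (ε : K) : Matrix (Fin 2) (Fin 2) K :=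
  !![ε, ε / (1 + ε); ε / (1 + ε), 1 - ε ^ 4]

theorem periodMatrix_transpose (ε : K) : (periodMatrix ε)ᵀ = periodMatrix ε := by
  ext i j
  fin_cases i <;> fin_cases j <;> rfl

theorem periodMatrix_mobius_numerator_eq {ε : K} (hε : IsPrimitiveRoot ε 5) :
    !![-1, 1; -1, 0] * periodMatrix ε + !![0, 0; 1, 1] =
      periodMatrix ε * (!![0, 0; -1, 0] * periodMatrix ε + !![0, 1; 0, 0]) := by
  have hsum := hε.geom_sum_five_eq_zero
  ext i j
  fin_cases i <;> fin_cases j <;>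
    simp only [periodMatrix, hε.div_one_add_eq_of_five, Matrix.add_apply, mul_apply,
      Fin.sum_univ_two, of_apply, cons_val', cons_val_zero, cons_val_one, cons_val_fin_one,
      Fin.zero_eta, Fin.mk_one]
  · linear_combination -ε * hsum
  · linear_combination (ε ^ 4 - ε ^ 3 + 2 * ε ^ 2 - 2 * ε + 1) * hsum
  · linear_combination (1 - ε) * hsum
  · linear_combination (1 - ε + ε ^ 2 - ε ^ 3 + ε ^ 4) * hsum

theorem det_periodMatrix_mobius_denominator (ε : K) :
    (!![0, 0; -1, 0] * periodMatrix ε + !![0, 1; 0, 0]).det = ε := by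
  simp [periodMatrix, det_fin_two]

theorem periodMatrix_mobius_fixed {ε : K} (hε : IsPrimitiveRoot ε 5) :
    (!![-1, 1; -1, 0] * periodMatrix ε + !![0, 0; 1, 1]) *
      (!![0, 0; -1, 0] * periodMatrix ε + !![0, 1; 0, 0])⁻¹ = periodMatrix ε := by
  have hdet : IsUnit (!![0, 0; -1, 0] * periodMatrix ε + !![0, 1; 0, 0]).det := by
    rw [det_periodMatrix_mobius_denominator]
    exact (hε.ne_zero (by norm_num)).isUnit
  rw [periodMatrix_mobius_numerator_eq hε, mul_nonsing_inv_cancel_right _ _ hdet]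

end PeriodMatrix

namespace Complex

theorem im_div_one_add (z : ℂ) : (z / (1 + z)).im = z.im / normSq (1 + z) := by
  rw [div_im]
  simp only [add_re, one_re, add_im, one_im, zero_add]
  ring

theorem one_lt_normSq_one_add {z : ℂ} (hz : 0 < z.re) : 1 < normSq (1 + z) := by
  rw [normSq_apply]
  simp only [add_re, one_re, add_im, one_im, zero_add]
  nlinarith [mul_self_nonneg z.im]

theorem im_one_sub_pow_four {ε : ℂ} (hε : ε ^ 5 = 1) : (1 - ε ^ 4).im = ε.im := by
  have hinv : ε ^ 4 = ε⁻¹ := eq_inv_of_mul_eq_one_left (by rw [← pow_succ, hε])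
  have hnorm : normSq ε = 1 := by
    rw [normSq_eq_norm_sq, norm_eq_one_of_pow_eq_one hε (by norm_num), one_pow]
  simp [hinv, inv_im, hnorm]

theorem exp_two_pi_I_div_re_pos {n : ℕ} (hn : 4 < n) :
    0 < (exp (2 * Real.pi * I / n)).re := by
  rw [show 2 * Real.pi * I / n = ((2 * Real.pi / n : ℝ) : ℂ) * I by push_cast; ring,
    exp_ofReal_mul_I_re]
  have : (4 : ℝ) < n := by exact_mod_cast hn
  apply Real.cos_pos_of_mem_Ioo
  constructor
  · linarith [show 0 < 2 * Real.pi / n by positivity, Real.pi_pos]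
  · rw [div_lt_iff₀ (by positivity)]
    nlinarith [Real.pi_pos]

theorem exp_two_pi_I_div_im_pos {n : ℕ} (hn : 2 < n) :
    0 < (exp (2 * Real.pi * I / n)).im := by
  rw [show 2 * Real.pi * I / n = ((2 * Real.pi / n : ℝ) : ℂ) * I by push_cast; ring,
    exp_ofReal_mul_I_im]
  have : (2 : ℝ) < n := by exact_mod_cast hn
  apply Real.sin_pos_of_pos_of_lt_pi
  · positivity
  · rw [div_lt_iff₀ (by positivity)]
    nlinarith [Real.pi_pos]

end Complex

theorem posDef_map_im_periodMatrix {ε : ℂ} (hε : ε ^ 5 = 1) (hre : 0 < ε.re)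
    (him : 0 < ε.im) : ((periodMatrix ε).map im).PosDef := by
  set t := ε.im / normSq (1 + ε)
  have hmap : (periodMatrix ε).map im = !![ε.im, t; t, ε.im] := by
    ext i j
    fin_cases i <;> fin_cases j <;> simp [periodMatrix, im_div_one_add, im_one_sub_pow_four hε, t]
  have hN := one_lt_normSq_one_add hre
  have ht : 0 < t := div_pos him (zero_lt_one.trans hN)
  have hts : t < ε.im := div_lt_self him hN
  rw [hmap]
  exact posDef_fin_two him (by nlinarith)

theorem Z5_period_matrix_fixed :
    let ε₅ : ℂ := Complex.exp (2 * Real.pi * Complex.I / 5)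
    let T : Matrix (Fin 4) (Fin 4) ℤ :=
      !![-1, 1, 0, 0; -1, 0, 1, 1; 0, 0, 0, 1; -1, 0, 0, 0]
    let A : Matrix (Fin 2) (Fin 2) ℂ := !![-1, 1; -1, 0]
    let B : Matrix (Fin 2) (Fin 2) ℂ := !![0, 0; 1, 1]
    let C : Matrix (Fin 2) (Fin 2) ℂ := !![0, 0; -1, 0]
    let D : Matrix (Fin 2) (Fin 2) ℂ := !![0, 1; 0, 0]
    let B₃ : Matrix (Fin 2) (Fin 2) ℂ :=
      !![ε₅, ε₅ / (1 + ε₅); ε₅ / (1 + ε₅), 1 - ε₅ ^ 4]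
    Tᵀ * J4 * T = J4 ∧
    B₃ᵀ = B₃ ∧
    (Matrix.of fun i j => (B₃ i j).im : Matrix (Fin 2) (Fin 2) ℝ).PosDef ∧
    (A * B₃ + B) * (C * B₃ + D)⁻¹ = B₃ := by
  intro ε₅ T A B C D B₃
  have hε : IsPrimitiveRoot ε₅ 5 := by simpa using isPrimitiveRoot_exp 5 (by norm_num)
  have hre : 0 < ε₅.re := by simpa using exp_two_pi_I_div_re_pos (n := 5) (by norm_num)
  have him : 0 < ε₅.im := by simpa using exp_two_pi_I_div_im_pos (n := 5) (by norm_num)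
  refine ⟨?_, periodMatrix_transpose ε₅, posDef_map_im_periodMatrix hε.pow_eq_one hre him,
    periodMatrix_mobius_fixed hε⟩
  decide
end
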